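/- The number of connected endofunctions on {1,...,n} with no fixed point equals (n-1)! · Σ_{j=0}^{n-2} n^j/j!. -/

import Mathlib

def ConnFun {n : ℕ} (f : Fin n → Fin n) : Prop :=
  Nonempty (Fin n) ∧ ∀ i j, Relation.EqvGen (fun a b => f a = b) i j

/-!
A connected endofunction `f` of a finite set is a single cycle with rooted trees hanging from it.
If `C` is its set of periodic points and `#C = k`, then `f` restricts to a cyclic permutation of
`C` (`(k - 1)!` choices) and, off `C`, it is a rooted forest with root set `C`. Rooted forests on
`n` points with a prescribed root set of size `k` number `k * n ^ (n - k - 1)` (the generalised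
Cayley formula): split off the set `J` of non-roots mapped directly into the roots and induct on
the number of non-roots; the step is an Abel-type binomial identity. A connected `f` has a fixed
point iff `k = 1`, so the count is `∑_{k ≥ 2} n.choose k * (k - 1)! * k * n ^ (n - k - 1)`,
which becomes the claimed sum under `j = n - k`.
-/

open Function Finset
open scoped Nat

section Iterate

variable {α β : Type*}

theorem apply_iterate_eq_iterate_apply_of_avoids {π : β → α} {g : β → β} {f : α → α}
    {p : β → Prop} (h : ∀ y, ¬ p y → π (g y) = f (π y)) {x : β} :
    ∀ {m : ℕ}, (∀ i < m, ¬ p (g^[i] x)) → π (g^[m] x) = f^[m] (π x)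
  | 0, _ => rfl
  | m + 1, hx => by
    rw [iterate_succ_apply', iterate_succ_apply', h _ (hx m m.lt_succ_self),
      apply_iterate_eq_iterate_apply_of_avoids h fun i hi => hx i (hi.trans m.lt_succ_self)]

theorem exists_iterate_mem_of_eqOn_compl {f g : α → α} {S : Set α} (hfg : Set.EqOn f g Sᶜ)
    {x : α} (h : ∃ m, g^[m] x ∈ S) : ∃ m, f^[m] x ∈ S := by
  classical
  have hpath : g^[Nat.find h] x = f^[Nat.find h] x :=
    apply_iterate_eq_iterate_apply_of_avoids (π := id) (fun _ hy => (hfg hy).symm)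
      fun i hi => Nat.find_min h hi
  exact ⟨Nat.find h, hpath ▸ Nat.find_spec h⟩

theorem exists_iterate_mem_periodicPts [Finite α] (f : α → α) (x : α) :
    ∃ m, f^[m] x ∈ periodicPts f := by
  obtain ⟨i, j, hij, hfij⟩ := Finite.exists_ne_map_eq_of_infinite fun m : ℕ => f^[m] x
  wlog hlt : i < j generalizing i j
  · exact this j i hij.symm hfij.symm (hij.lt_or_gt.resolve_left hlt)
  refine ⟨i, mk_mem_periodicPts (Nat.sub_pos_of_lt hlt) ?_⟩
  rw [IsPeriodicPt, IsFixedPt, ← iterate_add_apply, Nat.sub_add_cancel hlt.le]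
  exact hfij.symm

theorem periodicPts_subset_of_mapsTo {f : α → α} {S : Set α} (hS : Set.MapsTo f S S)
    (hreach : ∀ x, ∃ m, f^[m] x ∈ S) : periodicPts f ⊆ S := by
  rintro x hx
  obtain ⟨p, hp, hper⟩ := mem_periodicPts.mp hx
  obtain ⟨m, hm⟩ := hreach x
  have hle : m ≤ p * m := Nat.le_mul_of_pos_left m hp
  rw [← (hper.mul_const m).eq, ← Nat.sub_add_cancel hle, iterate_add_apply]
  exact hS.iterate _ hm

theorem eqvGen_iff_exists_iterate_eq (f : α → α) (x y : α) :
    Relation.EqvGen (fun a b => f a = b) x y ↔ ∃ p q, f^[p] x = f^[q] y := by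
  constructor
  · intro h
    induction h with
    | rel a b hab => exact ⟨1, 0, hab⟩
    | refl a => exact ⟨0, 0, rfl⟩
    | symm a b _ ih => obtain ⟨p, q, h⟩ := ih; exact ⟨q, p, h.symm⟩
    | trans a b c _ _ ih₁ ih₂ =>
      obtain ⟨p, q, h₁⟩ := ih₁
      obtain ⟨p', q', h₂⟩ := ih₂
      refine ⟨p' + p, q + q', ?_⟩
      rw [iterate_add_apply, h₁, ← iterate_add_apply, add_comm, iterate_add_apply, h₂,
        ← iterate_add_apply]
  · rintro ⟨p, q, h⟩
    have reach : ∀ m a, Relation.EqvGen (fun a b => f a = b) a (f^[m] a) := by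
      intro m a
      induction m with
      | zero => exact .refl a
      | succ m ih => exact .trans _ _ _ ih (.rel _ _ (iterate_succ_apply' f m a).symm)
    exact .trans _ _ _ (reach p x) (h ▸ .symm _ _ (reach q y))

def OrbitsMeet (f : α → α) : Prop := ∀ x y, ∃ p q, f^[p] x = f^[q] y

theorem OrbitsMeet.exists_iterate_eq_of_mem_periodicPts {f : α → α} (hf : OrbitsMeet f)
    {y : α} (hy : y ∈ periodicPts f) (x : α) : ∃ m, f^[m] x = y := by
  obtain ⟨p, q, hpq⟩ := hf x y
  obtain ⟨t, ht, hper⟩ := mem_periodicPts.mp hy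
  have hle : q ≤ t * q := Nat.le_mul_of_pos_left q ht
  refine ⟨t * q - q + p, ?_⟩
  rw [iterate_add_apply, hpq, ← iterate_add_apply, Nat.sub_add_cancel hle, (hper.mul_const q).eq]

theorem OrbitsMeet.forall_ne_iff_nontrivial [Finite α] [Nonempty α] {f : α → α}
    (hf : OrbitsMeet f) : (∀ x, f x ≠ x) ↔ (periodicPts f).Nontrivial := by
  constructor
  · intro hne
    obtain ⟨m, hm⟩ := exists_iterate_mem_periodicPts f (Classical.arbitrary α)
    exact ⟨_, hm, _, (bijOn_periodicPts f).mapsTo hm, (hne _).symm⟩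
  · rintro ⟨y, hy, z, hz, hyz⟩ x hx
    have fixed : ∀ w ∈ periodicPts f, w = x := by
      intro w hw
      obtain ⟨m, hm⟩ := hf.exists_iterate_eq_of_mem_periodicPts hw x
      rw [← hm, iterate_fixed hx]
    exact hyz ((fixed y hy).trans (fixed z hz).symm)

end Iterate

theorem Nat.card_subtype_eq_sum_card_fiber {α β : Type*} [Finite α] [Fintype β]
    (p : α → Prop) (π : α → β) :
    Nat.card {x // p x} = ∑ b, Nat.card {x // p x ∧ π x = b} := by
  rw [← Nat.card_congr (Equiv.sigmaFiberEquiv fun x : {x // p x} => π x), Nat.card_sigma]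
  exact Finset.sum_congr rfl fun b _ =>
    Nat.card_congr (Equiv.subtypeSubtypeEquivSubtypeInter p (fun x => π x = b))

def IsRootedForest {α : Type*} (R : Finset α) (f : α → α) : Prop :=
  (∀ x ∈ R, f x = x) ∧ ∀ x, ∃ m, f^[m] x ∈ R

section Graft

variable {α : Type*} [DecidableEq α] {R : Finset α} {J : Finset {x // x ∉ R}}

def graft (u : J → R) (g : {x // x ∉ R} → {x // x ∉ R}) (a : α) : α :=
  if ha : a ∈ R then a else if hJ : ⟨a, ha⟩ ∈ J then u ⟨_, hJ⟩ else g ⟨a, ha⟩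

variable (u : J → R) (g : {x // x ∉ R} → {x // x ∉ R})

theorem graft_of_mem {a : α} (ha : a ∈ R) : graft u g a = a := dif_pos ha

theorem graft_coe_of_mem {x : {x // x ∉ R}} (hx : x ∈ J) : graft u g x = u ⟨x, hx⟩ := by
  simp [graft, x.2, hx]

theorem graft_coe_of_notMem {x : {x // x ∉ R}} (hx : x ∉ J) : graft u g x = g x := by
  simp [graft, x.2, hx]

theorem isRootedForest_graft (hg : IsRootedForest J g) : IsRootedForest R (graft u g) := by
  refine ⟨fun a ha => graft_of_mem u g ha, fun a => ?_⟩
  by_cases ha : a ∈ R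
  · exact ⟨0, ha⟩
  classical
  have hreach := hg.2 ⟨a, ha⟩
  have hJ := Nat.find_spec hreach
  have hpath : ((g^[Nat.find hreach] ⟨a, ha⟩ : {x // x ∉ R}) : α) =
      (graft u g)^[Nat.find hreach] a :=
    apply_iterate_eq_iterate_apply_of_avoids (fun y hy => (graft_coe_of_notMem u g hy).symm)
      fun i hi => Nat.find_min hreach hi
  refine ⟨Nat.find hreach + 1, ?_⟩
  rw [iterate_succ_apply', ← hpath, graft_coe_of_mem u g hJ]
  exact Subtype.coe_prop _

theorem graft_mem_iff (x : {x // x ∉ R}) : graft u g x ∈ R ↔ x ∈ J := by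
  by_cases hx : x ∈ J
  · simp only [graft_coe_of_mem u g hx, Finset.coe_mem, hx]
  · simp only [graft_coe_of_notMem u g hx, (g x).2, hx]

theorem graft_inj {u u' : J → R} {g g' : {x // x ∉ R} → {x // x ∉ R}}
    (hg : ∀ x ∈ J, g x = x) (hg' : ∀ x ∈ J, g' x = x) :
    graft u g = graft u' g' ↔ u = u' ∧ g = g' := by
  refine ⟨fun h => ⟨funext fun j => Subtype.ext ?_, funext fun x => ?_⟩,
    fun ⟨hu, hg⟩ => hu ▸ hg ▸ rfl⟩
  · rw [← graft_coe_of_mem u g j.2, ← graft_coe_of_mem u' g' j.2, h]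
  · by_cases hx : x ∈ J
    · rw [hg x hx, hg' x hx]
    · exact Subtype.ext <| by
        rw [← graft_coe_of_notMem u g hx, ← graft_coe_of_notMem u' g' hx, h]

theorem exists_graft_eq {f : α → α} (hf : IsRootedForest R f)
    (hJ : ∀ x : {x // x ∉ R}, f x ∈ R ↔ x ∈ J) :
    ∃ (u : J → R) (g : {x // x ∉ R} → {x // x ∉ R}),
      IsRootedForest J g ∧ graft u g = f := by
  let g : {x // x ∉ R} → {x // x ∉ R} := fun x =>
    if hx : x ∈ J then x else ⟨f x, fun h => hx ((hJ x).1 h)⟩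
  have hg : IsRootedForest J g := by
    refine ⟨fun x hx => dif_pos hx, fun x => ?_⟩
    by_contra! hnever
    obtain ⟨m, hm⟩ := hf.2 x
    have hpath : ((g^[m] x : {x // x ∉ R}) : α) = f^[m] x :=
      apply_iterate_eq_iterate_apply_of_avoids (fun y hy => by simp [g, hy]) fun i _ => hnever i
    exact (g^[m] x).2 (hpath ▸ hm)
  refine ⟨fun j => ⟨f j, (hJ j).2 j.2⟩, g, hg, funext fun a => ?_⟩
  by_cases ha : a ∈ R
  · exact (graft_of_mem _ g ha).trans (hf.1 a ha).symm
  by_cases hx : (⟨a, ha⟩ : {x // x ∉ R}) ∈ J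
  · exact graft_coe_of_mem _ g hx
  · exact (graft_coe_of_notMem _ g hx).trans (by simp [g, hx])

end Graft

section Forest

theorem card_isRootedForest_univ {α : Type*} [Fintype α] :
    Nat.card {f // IsRootedForest (univ : Finset α) f} = 1 :=
  Nat.card_eq_one_iff_unique.mpr
    ⟨⟨fun f g => Subtype.ext <| funext fun x =>
        (f.2.1 x (mem_univ x)).trans (g.2.1 x (mem_univ x)).symm⟩,
      ⟨⟨id, fun _ _ => rfl, fun x => ⟨0, mem_univ x⟩⟩⟩⟩

theorem card_isRootedForest_empty {α : Type*} [Nonempty α] :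
    Nat.card {f // IsRootedForest (∅ : Finset α) f} = 0 :=
  Nat.card_eq_zero.mpr <| .inl ⟨fun f => by simpa using f.2.2 (Classical.arbitrary α)⟩

variable {α : Type*} [Fintype α] [DecidableEq α]

theorem card_isRootedForest_fiber (R : Finset α) (J : Finset {x // x ∉ R}) :
    Nat.card {f // IsRootedForest R f ∧ univ.filter (fun x : {x // x ∉ R} => f x ∈ R) = J} =
      #R ^ #J * Nat.card {g // IsRootedForest J g} := by
  let Φ : (J → R) × {g // IsRootedForest J g} →
      {f // IsRootedForest R f ∧ univ.filter (fun x : {x // x ∉ R} => f x ∈ R) = J} :=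
    fun ug => ⟨graft ug.1 ug.2, isRootedForest_graft _ _ ug.2.2, by
      ext x; simp only [mem_filter, mem_univ, true_and, graft_mem_iff]⟩
  have hΦ : Bijective Φ := by
    refine ⟨fun ⟨u, g, hg⟩ ⟨u', g', hg'⟩ h => ?_, fun ⟨f, hf, hJ⟩ => ?_⟩
    · obtain ⟨rfl, rfl⟩ := (graft_inj hg.1 hg'.1).mp (congrArg Subtype.val h)
      rfl
    · obtain ⟨u, g, hg, rfl⟩ := exists_graft_eq (J := J) hf fun x => by simp [← hJ]
      exact ⟨(u, ⟨g, hg⟩), rfl⟩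
  rw [← Nat.card_eq_of_bijective Φ hΦ, Nat.card_prod, Nat.card_fun, Nat.card_eq_finsetCard,
    Nat.card_eq_finsetCard]

theorem sum_choose_mul_pow_mul_mul_pow (k m : ℕ) :
    ∑ j ∈ range (m + 2), (m + 1).choose j * (k ^ j * (j * (m + 1) ^ (m + 1 - j))) =
      (m + 1) * (k * (k + (m + 1)) ^ m) := by
  have hterm : ∀ i ∈ range (m + 1),
      (m + 1).choose (i + 1) * (k ^ (i + 1) * ((i + 1 : ℕ) * (m + 1) ^ (m + 1 - (i + 1)))) =
        (m + 1) * (k * (k ^ i * (m + 1) ^ (m - i) * m.choose i)) := by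
    intro i _
    rw [Nat.add_sub_add_right, pow_succ]
    have := Nat.add_one_mul_choose_eq m i
    linear_combination (k ^ i * k * (m + 1) ^ (m - i)) * this.symm
  rw [sum_range_succ', sum_congr rfl hterm, ← mul_sum, ← mul_sum, add_pow k (m + 1) m]
  simp

/-- Multiplying by `card α` makes the count uniform: it is `#R * card α ^ (card α - #R - 1)` for
`R ≠ univ` but `1` for `R = univ`. -/
theorem card_isRootedForest_mul (R : Finset α) :
    Nat.card {f // IsRootedForest R f} * Fintype.card α =
      #R * Fintype.card α ^ (Fintype.card α - #R) := by
  induction hm : Fintype.card α - #R using Nat.strong_induction_on generalizing α with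
  | _ m ih =>
  rcases m with _ | m
  · have hR : R = univ := eq_univ_of_card R (le_antisymm (card_le_univ R) (by omega))
    subst hR
    rw [card_isRootedForest_univ, card_univ]
    simp
  set β := {x // x ∉ R}
  have hβ : Fintype.card β = m + 1 := by
    rw [Fintype.card_subtype_compl, Fintype.card_coe, hm]
  have : Nonempty β := Fintype.card_pos_iff.mp (by omega)
  have hstep : ∀ J : Finset β, Nat.card {g // IsRootedForest J g} * (m + 1) =
      #J * (m + 1) ^ (m + 1 - #J) := by
    intro J
    rcases J.eq_empty_or_nonempty with rfl | hJ
    · simp [card_isRootedForest_empty]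
    · have := ih (m + 1 - #J) (Nat.sub_lt m.succ_pos hJ.card_pos) J (by rw [hβ])
      rwa [hβ] at this
  have hsum : Nat.card {f // IsRootedForest R f} * (m + 1) =
      (m + 1) * (#R * (#R + (m + 1)) ^ m) := by
    rw [Nat.card_subtype_eq_sum_card_fiber _
        fun f : α → α => univ.filter fun x : β => f x ∈ R, sum_mul,
      ← sum_choose_mul_pow_mul_mul_pow]
    have hcard := sum_powerset_apply_card (fun j => #R ^ j * (j * (m + 1) ^ (m + 1 - j)))
      (x := (univ : Finset β))
    rw [powerset_univ, card_univ, hβ] at hcard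
    simp only [smul_eq_mul] at hcard
    rw [← hcard]
    exact sum_congr rfl fun J _ => by rw [card_isRootedForest_fiber, mul_assoc, hstep]
  have hα : Fintype.card α = #R + (m + 1) := by
    have := card_le_univ R
    omega
  rw [Nat.eq_of_mul_eq_mul_right m.succ_pos (hsum.trans (mul_comm _ _)), hα, mul_assoc,
    ← pow_succ]

end Forest

theorem Equiv.Perm.isCycleOn_univ_iff_cycleType {β : Type*} [Fintype β] [DecidableEq β]
    (h : 2 ≤ Fintype.card β) (σ : Equiv.Perm β) :
    σ.IsCycleOn _root_.Set.univ ↔ σ.cycleType = {Fintype.card β} := by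
  have hs : (_root_.Set.univ : Set β).Nontrivial :=
    Set.nontrivial_univ_iff.mpr (Fintype.one_lt_card_iff_nontrivial.mp h)
  constructor
  · intro hσ
    have hsupp : σ.support = univ := eq_univ_of_forall fun x =>
      Perm.mem_support.mpr (hσ.apply_ne hs (Set.mem_univ x))
    rw [(Perm.isCycle_iff_exists_isCycleOn.mpr ⟨_, hs, hσ, fun _ _ => trivial⟩).cycleType,
      hsupp, Finset.card_univ]
  · intro hσ
    have hsupp : σ.support = univ := by
      apply eq_univ_of_card
      rw [← Perm.sum_cycleType, hσ, Multiset.sum_singleton]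
    have hcyc : σ.IsCycle := Perm.card_cycleType_eq_one.mp (by simp [hσ])
    convert hcyc.isCycleOn
    ext x
    simp [← Perm.mem_support, hsupp]

theorem card_isCycleOn_univ {β : Type*} [Fintype β] [DecidableEq β] (h : 2 ≤ Fintype.card β) :
    Nat.card {σ : Equiv.Perm β // σ.IsCycleOn Set.univ} = (Fintype.card β - 1)! := by
  simp_rw [Equiv.Perm.isCycleOn_univ_iff_cycleType h, Nat.card_eq_fintype_card,
    Fintype.card_subtype, Equiv.Perm.card_of_cycleType_singleton h le_rfl, Nat.choose_self,
    mul_one]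

section AttachForest

variable {α : Type*} [DecidableEq α] {C : Finset α}

def attachForest (σ : Equiv.Perm C) (g : α → α) (a : α) : α :=
  if h : a ∈ C then σ ⟨a, h⟩ else g a

variable (σ : Equiv.Perm C) (g : α → α)

@[simp]
theorem attachForest_coe (x : C) : attachForest σ g x = σ x := dif_pos x.2

theorem attachForest_of_notMem {a : α} (ha : a ∉ C) : attachForest σ g a = g a := dif_neg ha

theorem semiconj_coe_attachForest : Semiconj ((↑) : C → α) σ (attachForest σ g) :=
  fun x => (attachForest_coe σ g x).symm

theorem exists_iterate_attachForest_mem (hg : IsRootedForest C g) (a : α) :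
    ∃ m, (attachForest σ g)^[m] a ∈ C :=
  exists_iterate_mem_of_eqOn_compl (fun _ ha => attachForest_of_notMem σ g ha) (hg.2 a)

theorem orbitsMeet_attachForest (hσ : σ.IsCycleOn Set.univ) (hg : IsRootedForest C g) :
    OrbitsMeet (attachForest σ g) := by
  intro x y
  obtain ⟨a, ha⟩ := exists_iterate_attachForest_mem σ g hg x
  obtain ⟨b, hb⟩ := exists_iterate_attachForest_mem σ g hg y
  obtain ⟨k, hk⟩ := hσ.exists_pow_eq' Set.finite_univ (Set.mem_univ ⟨_, ha⟩)
    (Set.mem_univ ⟨_, hb⟩)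
  refine ⟨k + a, b, ?_⟩
  rw [iterate_add_apply]
  exact ((semiconj_coe_attachForest σ g).iterate_right k ⟨_, ha⟩).symm.trans
    (congrArg Subtype.val hk)

theorem periodicPts_attachForest [Finite α] (hg : IsRootedForest C g) :
    periodicPts (attachForest σ g) = C := by
  refine (periodicPts_subset_of_mapsTo (fun x hx => ?_)
    (exists_iterate_attachForest_mem σ g hg)).antisymm fun x hx => ?_
  · exact (attachForest_coe σ g ⟨x, hx⟩).symm ▸ (σ ⟨x, hx⟩).2
  · exact (semiconj_coe_attachForest σ g).mapsTo_periodicPts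
      (σ.injective.mem_periodicPts ⟨x, hx⟩)

theorem exists_attachForest_eq [Finite α] {f : α → α} (hf : OrbitsMeet f)
    (hC : periodicPts f = C) :
    ∃ σ : Equiv.Perm C, σ.IsCycleOn Set.univ ∧
      ∃ g, IsRootedForest C g ∧ attachForest σ g = f := by
  have hbij : Set.BijOn f C C := hC ▸ bijOn_periodicPts f
  let σ : Equiv.Perm C := hbij.equiv f
  have hsemi : Semiconj ((↑) : C → α) σ f := fun _ => rfl
  let g : α → α := fun a => if a ∈ C then a else f a
  have hg : IsRootedForest C g := ⟨fun x hx => if_pos hx, fun a =>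
    exists_iterate_mem_of_eqOn_compl (fun x hx => if_neg hx)
      (hC ▸ exists_iterate_mem_periodicPts f a)⟩
  refine ⟨σ, ⟨σ.bijective.bijOn_univ, fun x _ y _ => ?_⟩, g, hg, funext fun a => ?_⟩
  · obtain ⟨m, hm⟩ := hf.exists_iterate_eq_of_mem_periodicPts (hC ▸ y.2 : (y : α) ∈ _) x
    exact ⟨m, Subtype.ext <| ((hsemi.iterate_right m x).trans hm :)⟩
  · by_cases ha : a ∈ C
    · exact attachForest_coe σ g ⟨a, ha⟩
    · exact (attachForest_of_notMem σ g ha).trans (if_neg ha)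

theorem attachForest_inj {σ σ' : Equiv.Perm C} {g g' : α → α} (hg : ∀ x ∈ C, g x = x)
    (hg' : ∀ x ∈ C, g' x = x) :
    attachForest σ g = attachForest σ' g' ↔ σ = σ' ∧ g = g' := by
  refine ⟨fun h => ⟨Equiv.ext fun x => Subtype.ext ?_, funext fun a => ?_⟩,
    fun ⟨hσ, hg⟩ => hσ ▸ hg ▸ rfl⟩
  · rw [← attachForest_coe σ g, h, attachForest_coe]
  · by_cases ha : a ∈ C
    · rw [hg a ha, hg' a ha]
    · rw [← attachForest_of_notMem σ g ha, h, attachForest_of_notMem σ' g' ha]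

end AttachForest

theorem sum_descFactorial_mul_pow_reflect (m : ℕ) :
    ∑ k ∈ range (m + 2),
        (if 2 ≤ k then (m + 1).descFactorial k * (m + 1) ^ (m + 1 - k) else 0) =
      (∑ j ∈ range m, m.descFactorial (m - j) * (m + 1) ^ j) * (m + 1) := by
  rw [← sum_range_reflect, sum_range_succ, sum_range_succ, sum_mul]
  have h1 : m + 2 - 1 - m = 1 := by omega
  have h2 : m + 2 - 1 - (m + 1) = 0 := by omega
  simp only [h1, h2, show ¬ 2 ≤ 1 by omega, show ¬ 2 ≤ 0 by omega, if_false, add_zero]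
  refine sum_congr rfl fun j hj => ?_
  have hj := mem_range.mp hj
  rw [if_pos (by omega), show m + 2 - 1 - j = m - j + 1 by omega, Nat.succ_descFactorial_succ,
    show m + 1 - (m - j + 1) = j by omega]
  ring

section Count

variable {α : Type*} [Fintype α] [DecidableEq α]

theorem card_orbitsMeet_periodicPts_eq (C : Finset α) :
    Nat.card {f : α → α // OrbitsMeet f ∧ periodicPts f = C} =
      Nat.card {σ : Equiv.Perm C // σ.IsCycleOn Set.univ} *
        Nat.card {g // IsRootedForest C g} := by
  let Φ : {σ : Equiv.Perm C // σ.IsCycleOn Set.univ} × {g // IsRootedForest C g} →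
      {f : α → α // OrbitsMeet f ∧ periodicPts f = C} := fun p =>
    ⟨attachForest p.1 p.2, orbitsMeet_attachForest _ _ p.1.2 p.2.2,
      periodicPts_attachForest _ _ p.2.2⟩
  have hΦ : Bijective Φ := by
    refine ⟨fun ⟨⟨σ, _⟩, g, hg⟩ ⟨⟨σ', _⟩, g', hg'⟩ h => ?_,
      fun ⟨f, hf, hC⟩ => ?_⟩
    · obtain ⟨rfl, rfl⟩ := (attachForest_inj hg.1 hg'.1).mp (congrArg Subtype.val h)
      rfl
    · obtain ⟨σ, hσ, g, hg, rfl⟩ := exists_attachForest_eq hf hC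
      exact ⟨(⟨σ, hσ⟩, ⟨g, hg⟩), rfl⟩
  rw [← Nat.card_eq_of_bijective Φ hΦ, Nat.card_prod]

theorem card_orbitsMeet_forall_ne_periodicPts_eq [Nonempty α] (C : Finset α) :
    Nat.card {f : α → α // (OrbitsMeet f ∧ ∀ x, f x ≠ x) ∧ periodicPts f = C} =
      if 2 ≤ #C then (#C - 1)! * Nat.card {g // IsRootedForest C g} else 0 := by
  have hiff : ∀ f : α → α, ((OrbitsMeet f ∧ ∀ x, f x ≠ x) ∧ periodicPts f = C) ↔
      (OrbitsMeet f ∧ periodicPts f = C) ∧ 2 ≤ #C := by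
    intro f
    rw [Nat.succ_le_iff, one_lt_card_iff_nontrivial]
    constructor
    · rintro ⟨⟨hf, hne⟩, hC⟩
      have hnt := hf.forall_ne_iff_nontrivial.mp hne
      rw [hC] at hnt
      exact ⟨⟨hf, hC⟩, hnt⟩
    · rintro ⟨⟨hf, hC⟩, hnt⟩
      exact ⟨⟨hf, hf.forall_ne_iff_nontrivial.mpr (by rw [hC]; exact hnt)⟩, hC⟩
  rw [Nat.card_congr (Equiv.subtypeEquivRight hiff)]
  split_ifs with h
  · rw [Nat.card_congr (Equiv.subtypeEquivRight fun f => and_iff_left h),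
      card_orbitsMeet_periodicPts_eq, card_isCycleOn_univ (by rwa [Fintype.card_coe]),
      Fintype.card_coe]
  · simp [h]

theorem card_orbitsMeet_forall_ne_mul [Nonempty α] :
    Nat.card {f : α → α // OrbitsMeet f ∧ ∀ x, f x ≠ x} * Fintype.card α =
      ∑ k ∈ range (Fintype.card α + 1), if 2 ≤ k then
        (Fintype.card α).descFactorial k * Fintype.card α ^ (Fintype.card α - k) else 0 := by
  classical
  set n := Fintype.card α
  have hfiber : ∀ C : Finset α, Nat.card {f : α → α //
      (OrbitsMeet f ∧ ∀ x, f x ≠ x) ∧ (periodicPts f).toFinset = C} * n =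
        if 2 ≤ #C then (#C)! * n ^ (n - #C) else 0 := by
    intro C
    rw [Nat.card_congr (Equiv.subtypeEquivRight fun f => by rw [← coe_inj, Set.coe_toFinset]),
      card_orbitsMeet_forall_ne_periodicPts_eq]
    split_ifs with h
    · rw [mul_assoc, card_isRootedForest_mul, ← mul_assoc, mul_comm (#C - 1)!,
        Nat.mul_factorial_pred (by omega)]
    · exact zero_mul n
  have hsum := sum_powerset_apply_card (fun k => if 2 ≤ k then k ! * n ^ (n - k) else 0)
    (x := (univ : Finset α))
  rw [powerset_univ, card_univ] at hsum
  rw [Nat.card_subtype_eq_sum_card_fiber _ fun f : α → α => (periodicPts f).toFinset, sum_mul,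
    sum_congr rfl fun C _ => hfiber C, hsum]
  refine sum_congr rfl fun k _ => ?_
  split_ifs
  · rw [smul_eq_mul, Nat.descFactorial_eq_factorial_mul_choose, mul_assoc, mul_left_comm]
  · exact smul_zero _

end Count

theorem connFun_iff_orbitsMeet {n : ℕ} (hn : 1 ≤ n) (f : Fin n → Fin n) :
    ConnFun f ↔ OrbitsMeet f := by
  simp only [ConnFun, eqvGen_iff_exists_iterate_eq, OrbitsMeet, and_iff_right_iff_imp]
  exact fun _ => ⟨⟨0, hn⟩⟩

/-- The number of connected endofunctions on `{1,…,n}` with no fixed point equals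
`(n-1)!·Σ_{j=0}^{n-2} n^j/j!`, with `(n-1)!/j!` expressed as a descending factorial. -/
theorem stmt14 (n : ℕ) (hn : 1 ≤ n) :
    Nat.card {f : Fin n → Fin n // ConnFun f ∧ ∀ i, f i ≠ i} =
      ∑ j ∈ Finset.range (n - 1), (n - 1).descFactorial (n - 1 - j) * n ^ j := by
  obtain ⟨m, rfl⟩ := Nat.exists_eq_add_of_le' hn
  have : Nonempty (Fin (m + 1)) := ⟨0⟩
  apply Nat.eq_of_mul_eq_mul_right hn
  have hcount := card_orbitsMeet_forall_ne_mul (α := Fin (m + 1))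
  rw [Fintype.card_fin] at hcount
  rw [Nat.card_congr (Equiv.subtypeEquivRight fun f => by rw [connFun_iff_orbitsMeet hn]),
    hcount, sum_descFactorial_mul_pow_reflect, Nat.add_sub_cancel]
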